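/- Let γ : [0,∞) → [0,∞) be continuous and nondecreasing with γ(0) = 0, γ(s) > 0 for every s > 0, and ∫₀^ε ds/γ(s) = +∞ for every ε > 0. Let T > 0, C > 0, B ≥ 0, and let (u_{p,q}) for integers p ≥ q ≥ 0 be measurable functions from [0,T] to [0,B] satisfying u_{p+1,q+1}(t) ≤ C ∫₀ᵗ γ( u_{p,q}(s) ) ds for all p ≥ q ≥ 0 and t ∈ [0,T]. Then for every t ∈ [0,T], sup_{p ≥ q ≥ N} u_{p,q}(t) → 0 as N → ∞ (equivalently, inf_{N≥0} sup_{p≥q≥N} u_{p,q}(t) = 0). -/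

import Mathlib

/-!
Let `v N t` be the supremum of `u p q t` over `p ≥ q ≥ N`. These functions decrease in `N` and
satisfy `v (N + 1) t ≤ C ∫₀ᵗ γ (v N)`, so by dominated convergence their limit `w` satisfies
`w t ≤ Ψ t := C ∫₀ᵗ γ (w)`. The function `Ψ` is continuous, nondecreasing, vanishes at `0` and
obeys `Ψ b - Ψ a ≤ C (b - a) γ (Ψ b)`. If `Ψ t = ε > 0`, pick times `τ k` with
`Ψ (τ k) = ε / 2 ^ k`; then `(ε / 2 ^ k) / γ (ε / 2 ^ k) ≤ 2 C (τ k - τ (k + 1))`, so these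
quotients have sum at most `2 C t`, whereas the Osgood condition, split over the dyadic intervals
`(ε / 2 ^ (k + 1), ε / 2 ^ k]`, makes the sum infinite.
-/

open MeasureTheory Set Filter

theorem setLIntegral_Ioc_one_div_le {γ : ℝ → ℝ} (hγ_mono : MonotoneOn γ (Ioi 0))
    (hγ_pos : ∀ s, 0 < s → 0 < γ s) {a : ℝ} (ha : 0 < a) (b : ℝ) :
    ∫⁻ s in Ioc a b, ENNReal.ofReal (1 / γ s) ≤ ENNReal.ofReal ((b - a) / γ a) :=
  calc ∫⁻ s in Ioc a b, ENNReal.ofReal (1 / γ s)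
      ≤ ∫⁻ _ in Ioc a b, ENNReal.ofReal (1 / γ a) :=
        setLIntegral_mono measurable_const fun s hs => ENNReal.ofReal_le_ofReal <|
          one_div_le_one_div_of_le (hγ_pos a ha) (hγ_mono ha (ha.trans hs.1) hs.1.le)
    _ = ENNReal.ofReal ((b - a) / γ a) := by
        have hγa := hγ_pos a ha
        rw [setLIntegral_const, Real.volume_Ioc, ← ENNReal.ofReal_mul (by positivity)]
        ring_nf

theorem Ioc_zero_subset_iUnion_Ioc_div_two_pow (ε : ℝ) :
    Ioc 0 ε ⊆ ⋃ k : ℕ, Ioc (ε / 2 ^ (k + 1)) (ε / 2 ^ k) := by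
  intro s ⟨hs0, hsε⟩
  obtain ⟨k, hk, hk'⟩ := exists_nat_pow_near ((one_le_div hs0).2 hsε) one_lt_two
  refine mem_iUnion.2 ⟨k, ?_, ?_⟩
  · rwa [div_lt_iff₀ (by positivity), mul_comm, ← div_lt_iff₀ hs0]
  · rwa [le_div_iff₀ (by positivity), mul_comm, ← le_div_iff₀ hs0]

theorem tsum_ofReal_div_two_pow_osgood_eq_top {γ : ℝ → ℝ} (hγ_mono : MonotoneOn γ (Ioi 0))
    (hγ_pos : ∀ s, 0 < s → 0 < γ s) {ε : ℝ} (hε : 0 < ε)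
    (h_osgood : ∫⁻ s in Ioc 0 ε, ENNReal.ofReal (1 / γ s) = ⊤) :
    ∑' k : ℕ, ENNReal.ofReal (ε / 2 ^ k / γ (ε / 2 ^ k)) = ⊤ := by
  refine top_unique ?_
  calc ⊤ = ∫⁻ s in Ioc 0 ε, ENNReal.ofReal (1 / γ s) := h_osgood.symm
    _ ≤ ∫⁻ s in ⋃ k : ℕ, Ioc (ε / 2 ^ (k + 1)) (ε / 2 ^ k), ENNReal.ofReal (1 / γ s) :=
        lintegral_mono_set (Ioc_zero_subset_iUnion_Ioc_div_two_pow ε)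
    _ ≤ ∑' k : ℕ, ∫⁻ s in Ioc (ε / 2 ^ (k + 1)) (ε / 2 ^ k), ENNReal.ofReal (1 / γ s) :=
        lintegral_iUnion_le _ _
    _ ≤ ∑' k : ℕ, ENNReal.ofReal (ε / 2 ^ (k + 1) / γ (ε / 2 ^ (k + 1))) := by
        refine ENNReal.tsum_le_tsum fun k => ?_
        have h := setLIntegral_Ioc_one_div_le hγ_mono hγ_pos (a := ε / 2 ^ (k + 1)) (by positivity)
          (ε / 2 ^ k)
        rwa [show ε / 2 ^ k - ε / 2 ^ (k + 1) = ε / 2 ^ (k + 1) by rw [pow_succ]; ring] at h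
    _ ≤ ∑' k : ℕ, ENNReal.ofReal (ε / 2 ^ k / γ (ε / 2 ^ k)) :=
        ENNReal.tsum_comp_le_tsum_of_injective (add_left_injective 1)
          (fun k => ENNReal.ofReal (ε / 2 ^ k / γ (ε / 2 ^ k)))

theorem nonpos_of_sub_le_mul_osgood {γ Ψ : ℝ → ℝ} {C T : ℝ} (hγ_mono : MonotoneOn γ (Ioi 0))
    (hγ_pos : ∀ s, 0 < s → 0 < γ s)
    (h_osgood : ∀ ε, 0 < ε → ∫⁻ s in Ioc 0 ε, ENNReal.ofReal (1 / γ s) = ⊤)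
    (hC : 0 ≤ C) (hT : 0 ≤ T) (hΨ_cont : ContinuousOn Ψ (Icc 0 T))
    (hΨ_mono : MonotoneOn Ψ (Icc 0 T)) (hΨ_zero : Ψ 0 = 0)
    (hΨ_sub : ∀ a b, 0 ≤ a → a ≤ b → b ≤ T → Ψ b - Ψ a ≤ C * (b - a) * γ (Ψ b)) :
    Ψ T ≤ 0 := by
  by_contra! hε
  set ε := Ψ T
  have hτ : ∀ k : ℕ, ∃ τ ∈ Icc 0 T, Ψ τ = ε / 2 ^ k := fun k =>
    intermediate_value_Icc hT hΨ_cont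
      ⟨by rw [hΨ_zero]; positivity, div_le_self hε.le (one_le_pow₀ one_le_two)⟩
  choose τ hτ_mem hΨτ using hτ
  have hτ_succ : ∀ k, τ (k + 1) ≤ τ k := fun k =>
    (hΨ_mono.reflect_lt (hτ_mem (k + 1)) (hτ_mem k) <| by
      rw [hΨτ, hΨτ]
      exact div_lt_div_of_pos_left hε (by positivity)
        (pow_lt_pow_right₀ one_lt_two k.lt_succ_self)).le
  have hstep : ∀ k, ε / 2 ^ k / γ (ε / 2 ^ k) ≤ 2 * C * (τ k - τ (k + 1)) := fun k => by
    have h := hΨ_sub _ _ (hτ_mem (k + 1)).1 (hτ_succ k) (hτ_mem k).2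
    rw [hΨτ, hΨτ, pow_succ, ← div_div] at h
    rw [div_le_iff₀ (hγ_pos _ (by positivity))]
    linarith
  have hsum :
      ∑' k : ℕ, ENNReal.ofReal (ε / 2 ^ k / γ (ε / 2 ^ k)) ≤ ENNReal.ofReal (2 * C * T) := by
    refine ENNReal.tsum_le_of_sum_range_le fun n => ?_
    rw [← ENNReal.ofReal_sum_of_nonneg fun k _ =>
      (div_pos (by positivity) (hγ_pos _ (by positivity))).le]
    refine ENNReal.ofReal_le_ofReal ?_
    calc ∑ k ∈ Finset.range n, ε / 2 ^ k / γ (ε / 2 ^ k)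
        ≤ ∑ k ∈ Finset.range n, 2 * C * (τ k - τ (k + 1)) :=
          Finset.sum_le_sum fun k _ => hstep k
      _ = 2 * C * (τ 0 - τ n) := by rw [← Finset.mul_sum, Finset.sum_range_sub' τ]
      _ ≤ 2 * C * T := by gcongr; linarith [(hτ_mem 0).2, (hτ_mem n).1]
  rw [tsum_ofReal_div_two_pow_osgood_eq_top hγ_mono hγ_pos hε (h_osgood ε hε)] at hsum
  exact ENNReal.ofReal_ne_top (top_le_iff.1 hsum)

theorem aestronglyMeasurable_comp_of_nonneg_on {γ f : ℝ → ℝ} {μ : Measure ℝ} {s : Set ℝ}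
    (hγ : ContinuousOn γ (Ici 0)) (hf : Measurable f) (hs : MeasurableSet s)
    (hfs : ∀ x ∈ s, 0 ≤ f x) : AEStronglyMeasurable (fun x => γ (f x)) (μ.restrict s) := by
  have hγ' : Continuous fun y => γ (max y 0) :=
    hγ.comp_continuous (continuous_id.max continuous_const) fun y => le_max_right y 0
  refine (hγ'.comp_aestronglyMeasurable hf.aestronglyMeasurable.restrict).congr ?_
  filter_upwards [ae_restrict_mem hs] with x hx
  simp only [max_eq_left (hfs x hx)]

theorem integrableOn_comp_of_mapsTo_Icc {γ f : ℝ → ℝ} {s : Set ℝ} {B : ℝ}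
    (hγ : ContinuousOn γ (Ici 0)) (hf : Measurable f) (hs : MeasurableSet s)
    (hs_fin : volume s ≠ ⊤) (hfs : MapsTo f s (Icc 0 B)) :
    IntegrableOn (fun x => γ (f x)) s := by
  obtain ⟨M, hM⟩ := isCompact_Icc.exists_bound_of_continuousOn (hγ.mono Icc_subset_Ici_self)
  have := isFiniteMeasure_restrict.2 hs_fin
  refine Integrable.of_bound
    (aestronglyMeasurable_comp_of_nonneg_on hγ hf hs fun x hx => (hfs hx).1) M ?_
  filter_upwards [ae_restrict_mem hs] with x hx
  exact hM _ (hfs hx)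

theorem intervalIntegrable_comp_of_mapsTo_Icc {γ f : ℝ → ℝ} {a b B : ℝ}
    (hγ : ContinuousOn γ (Ici 0)) (hf : Measurable f) (hfab : MapsTo f (uIcc a b) (Icc 0 B)) :
    IntervalIntegrable (fun x => γ (f x)) volume a b :=
  (integrableOn_comp_of_mapsTo_Icc hγ hf measurableSet_uIcc measure_Icc_lt_top.ne
    hfab).intervalIntegrable

theorem tendsto_intervalIntegral_comp {γ g : ℝ → ℝ} {f : ℕ → ℝ → ℝ} {B t : ℝ}
    (hγ : ContinuousOn γ (Ici 0)) (hf : ∀ n, Measurable (f n)) (ht : 0 ≤ t)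
    (hf_mem : ∀ n, MapsTo (f n) (Icc 0 t) (Icc 0 B))
    (hfg : ∀ s ∈ Icc 0 t, Tendsto (fun n => f n s) atTop (nhds (g s))) :
    Tendsto (fun n => ∫ s in 0..t, γ (f n s)) atTop (nhds (∫ s in 0..t, γ (g s))) := by
  obtain ⟨M, hM⟩ := isCompact_Icc.exists_bound_of_continuousOn (hγ.mono Icc_subset_Ici_self)
  have hIoc : ∀ {s}, s ∈ uIoc 0 t → s ∈ Icc 0 t := fun hs =>
    Ioc_subset_Icc_self (by rwa [uIoc_of_le ht] at hs)
  refine intervalIntegral.tendsto_integral_filter_of_dominated_convergence (fun _ => M)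
    (Eventually.of_forall fun n => aestronglyMeasurable_comp_of_nonneg_on hγ (hf n)
      measurableSet_uIoc fun s hs => (hf_mem n (hIoc hs)).1)
    (Eventually.of_forall fun n => ae_of_all _ fun s hs => hM _ (hf_mem n (hIoc hs)))
    intervalIntegrable_const (ae_of_all _ fun s hs => ?_)
  have hs := hIoc hs
  have hg : 0 ≤ g s := ge_of_tendsto' (hfg s hs) fun n => (hf_mem n hs).1
  exact ((hγ _ hg).tendsto).comp
    (tendsto_nhdsWithin_iff.2 ⟨hfg s hs, Eventually.of_forall fun n => (hf_mem n hs).1⟩)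

theorem eq_zero_of_le_integral_osgood {γ v : ℝ → ℝ} {C T B : ℝ}
    (hγ_cont : ContinuousOn γ (Ici 0)) (hγ_mono : MonotoneOn γ (Ici 0))
    (hγ_nonneg : ∀ s, 0 ≤ s → 0 ≤ γ s) (hγ_pos : ∀ s, 0 < s → 0 < γ s)
    (h_osgood : ∀ ε, 0 < ε → ∫⁻ s in Ioc 0 ε, ENNReal.ofReal (1 / γ s) = ⊤)
    (hC : 0 ≤ C) (hv_meas : Measurable v) (hv_mem : MapsTo v (Icc 0 T) (Icc 0 B))
    (hv_le : ∀ t ∈ Icc 0 T, v t ≤ C * ∫ s in 0..t, γ (v s)) :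
    ∀ t ∈ Icc 0 T, v t = 0 := by
  intro t ht
  set Ψ := fun x => C * ∫ s in 0..x, γ (v s)
  have hv_mem' : MapsTo v (Icc 0 t) (Icc 0 B) := hv_mem.mono_left (Icc_subset_Icc_right ht.2)
  have hv_Ψ : ∀ s ∈ Icc 0 t, v s ≤ Ψ s := fun s hs => hv_le s ⟨hs.1, hs.2.trans ht.2⟩
  have hint : IntegrableOn (fun s => γ (v s)) (Icc 0 t) :=
    integrableOn_comp_of_mapsTo_Icc hγ_cont hv_meas measurableSet_Icc measure_Icc_lt_top.ne hv_mem'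
  have hint' : ∀ a ∈ Icc 0 t, ∀ b ∈ Icc 0 t, IntervalIntegrable (fun s => γ (v s)) volume a b :=
    fun a ha b hb => intervalIntegrable_comp_of_mapsTo_Icc hγ_cont hv_meas
      (hv_mem'.mono_left (uIcc_subset_Icc ha hb))
  have hΨ_sub : ∀ a ∈ Icc 0 t, ∀ b ∈ Icc 0 t, Ψ b - Ψ a = C * ∫ s in a..b, γ (v s) :=
    fun a ha b hb => by
      rw [← mul_sub, intervalIntegral.integral_interval_sub_left (hint' 0 ⟨le_rfl, ht.1⟩ b hb)
        (hint' 0 ⟨le_rfl, ht.1⟩ a ha)]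
  have hΨ_mono : MonotoneOn Ψ (Icc 0 t) := fun a ha b hb hab => by
    rw [← sub_nonneg, hΨ_sub a ha b hb]
    exact mul_nonneg hC (intervalIntegral.integral_nonneg hab fun s hs =>
      hγ_nonneg _ (hv_mem' ⟨ha.1.trans hs.1, hs.2.trans hb.2⟩).1)
  have hΨ_cont : ContinuousOn Ψ (Icc 0 t) := by
    have h := intervalIntegral.continuousOn_primitive_interval (a := 0) (b := t)
      (μ := volume) (by rwa [uIcc_of_le ht.1])
    rw [uIcc_of_le ht.1] at h
    exact continuousOn_const.mul h
  have hΨ_inc : ∀ a b, 0 ≤ a → a ≤ b → b ≤ t → Ψ b - Ψ a ≤ C * (b - a) * γ (Ψ b) := by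
    intro a b ha hab hb
    have hb' : b ∈ Icc 0 t := ⟨ha.trans hab, hb⟩
    have hγv : ∀ s ∈ Icc a b, γ (v s) ≤ γ (Ψ b) := fun s hs => by
      have hs' : s ∈ Icc 0 t := ⟨ha.trans hs.1, hs.2.trans hb⟩
      exact hγ_mono (hv_mem' hs').1 ((hv_mem' hb').1.trans (hv_Ψ b hb'))
        ((hv_Ψ s hs').trans (hΨ_mono hs' hb' hs.2))
    calc Ψ b - Ψ a = C * ∫ s in a..b, γ (v s) := hΨ_sub a ⟨ha, hab.trans hb⟩ b hb'
      _ ≤ C * ∫ _ in a..b, γ (Ψ b) := by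
        gcongr
        exact intervalIntegral.integral_mono_on hab (hint' a ⟨ha, hab.trans hb⟩ b hb')
          intervalIntegrable_const hγv
      _ = C * (b - a) * γ (Ψ b) := by
        rw [intervalIntegral.integral_const, smul_eq_mul, mul_assoc]
  have hΨ_nonpos : Ψ t ≤ 0 :=
    nonpos_of_sub_le_mul_osgood (hγ_mono.mono Ioi_subset_Ici_self) hγ_pos h_osgood hC ht.1
      hΨ_cont hΨ_mono (by simp [Ψ]) hΨ_inc
  exact le_antisymm ((hv_Ψ t ⟨ht.1, le_rfl⟩).trans hΨ_nonpos) (hv_mem ht).1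

theorem iInf_eq_zero_of_le_integral_osgood {γ : ℝ → ℝ} {v : ℕ → ℝ → ℝ} {C T B : ℝ}
    (hγ_cont : ContinuousOn γ (Ici 0)) (hγ_mono : MonotoneOn γ (Ici 0))
    (hγ_nonneg : ∀ s, 0 ≤ s → 0 ≤ γ s) (hγ_pos : ∀ s, 0 < s → 0 < γ s)
    (h_osgood : ∀ ε, 0 < ε → ∫⁻ s in Ioc 0 ε, ENNReal.ofReal (1 / γ s) = ⊤)
    (hC : 0 ≤ C) (hv_meas : ∀ n, Measurable (v n)) (hv_mem : ∀ n, MapsTo (v n) (Icc 0 T) (Icc 0 B))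
    (hv_succ : ∀ n, ∀ t ∈ Icc 0 T, v (n + 1) t ≤ v n t)
    (hv_le : ∀ n, ∀ t ∈ Icc 0 T, v (n + 1) t ≤ C * ∫ s in 0..t, γ (v n s)) :
    ∀ t ∈ Icc 0 T, ⨅ n, v n t = 0 := by
  have hbdd : ∀ t ∈ Icc 0 T, BddBelow (range fun n => v n t) := fun t ht =>
    ⟨0, forall_mem_range.2 fun n => (hv_mem n ht).1⟩
  have hlim : ∀ t ∈ Icc 0 T, Tendsto (fun n => v n t) atTop (nhds (⨅ n, v n t)) := fun t ht =>
    tendsto_atTop_ciInf (antitone_nat_of_succ_le fun n => hv_succ n t ht) (hbdd t ht)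
  have hmem : MapsTo (fun t => ⨅ n, v n t) (Icc 0 T) (Icc 0 B) := fun t ht =>
    ⟨le_ciInf fun n => (hv_mem n ht).1, (ciInf_le (hbdd t ht) 0).trans (hv_mem 0 ht).2⟩
  refine eq_zero_of_le_integral_osgood hγ_cont hγ_mono hγ_nonneg hγ_pos h_osgood hC
    (Measurable.iInf hv_meas) hmem fun t ht => ?_
  have hIcc : Icc 0 t ⊆ Icc 0 T := Icc_subset_Icc_right ht.2
  have hint := tendsto_intervalIntegral_comp hγ_cont hv_meas ht.1
    (fun n => (hv_mem n).mono_left hIcc) fun s hs => hlim s (hIcc hs)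
  exact ge_of_tendsto' (hint.const_mul C) fun n =>
    (ciInf_le (hbdd t ht) (n + 1)).trans (hv_le n t ht)

noncomputable def tailSup (u : ℕ → ℕ → ℝ → ℝ) (N : ℕ) (t : ℝ) : ℝ :=
  ⨆ p : ℕ, ⨆ q : ℕ, ⨆ (_ : N ≤ q), ⨆ (_ : q ≤ p), u p q t

section tailSup

variable {u : ℕ → ℕ → ℝ → ℝ} {N : ℕ} {t B : ℝ}

theorem tailSup_nonneg (h : ∀ p q, q ≤ p → 0 ≤ u p q t) : 0 ≤ tailSup u N t :=
  Real.iSup_nonneg fun p => Real.iSup_nonneg fun q => Real.iSup_nonneg fun _ =>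
    Real.iSup_nonneg fun hqp => h p q hqp

theorem tailSup_le (hB : 0 ≤ B) (h : ∀ p q, N ≤ q → q ≤ p → u p q t ≤ B) : tailSup u N t ≤ B :=
  Real.iSup_le (fun p => Real.iSup_le (fun q => Real.iSup_le (fun hNq =>
    Real.iSup_le (fun hqp => h p q hNq hqp) hB) hB) hB) hB

theorem le_tailSup (hB : 0 ≤ B) (h : ∀ p q, q ≤ p → u p q t ≤ B) {p q : ℕ} (hNq : N ≤ q)
    (hqp : q ≤ p) : u p q t ≤ tailSup u N t := by
  refine le_ciSup_of_le ⟨B, forall_mem_range.2 fun p' => ?_⟩ p <|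
    le_ciSup_of_le ⟨B, forall_mem_range.2 fun q' => ?_⟩ q <|
    le_ciSup_of_le ⟨B, forall_mem_range.2 fun _ => ?_⟩ hNq <|
    le_ciSup_of_le ⟨B, forall_mem_range.2 fun _ => h p q hqp⟩ hqp le_rfl
  · exact Real.iSup_le (fun q' => Real.iSup_le (fun _ =>
      Real.iSup_le (fun hqp => h _ _ hqp) hB) hB) hB
  · exact Real.iSup_le (fun _ => Real.iSup_le (fun hqp => h _ _ hqp) hB) hB
  · exact Real.iSup_le (fun hqp => h _ _ hqp) hB

theorem tailSup_succ_le (hB : 0 ≤ B) (h : ∀ p q, q ≤ p → u p q t ∈ Icc 0 B) :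
    tailSup u (N + 1) t ≤ tailSup u N t :=
  tailSup_le (tailSup_nonneg fun p q hqp => (h p q hqp).1) fun _ _ hNq hqp =>
    le_tailSup hB (fun p q hqp => (h p q hqp).2) (Nat.le_of_succ_le hNq) hqp

theorem mapsTo_tailSup {s : Set ℝ} (hB : 0 ≤ B) (h : ∀ p q, q ≤ p → MapsTo (u p q) s (Icc 0 B)) :
    MapsTo (tailSup u N) s (Icc 0 B) := fun _ ht =>
  ⟨tailSup_nonneg fun p q hqp => (h p q hqp ht).1, tailSup_le hB fun p q _ hqp => (h p q hqp ht).2⟩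

theorem measurable_tailSup (h : ∀ p q, q ≤ p → Measurable (u p q)) : Measurable (tailSup u N) :=
  Measurable.iSup fun p => Measurable.iSup fun q => Measurable.iSup fun _ =>
    Measurable.iSup fun hqp => h p q hqp

end tailSup

theorem tailSup_succ_le_integral {γ : ℝ → ℝ} {u : ℕ → ℕ → ℝ → ℝ} {C T B : ℝ}
    (hγ_cont : ContinuousOn γ (Ici 0)) (hγ_mono : MonotoneOn γ (Ici 0))
    (hγ_nonneg : ∀ s, 0 ≤ s → 0 ≤ γ s) (hC : 0 ≤ C) (hB : 0 ≤ B)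
    (hu_meas : ∀ p q, q ≤ p → Measurable (u p q))
    (hu_mem : ∀ p q, q ≤ p → MapsTo (u p q) (Icc 0 T) (Icc 0 B))
    (h_rec : ∀ p q, q ≤ p → ∀ t ∈ Icc 0 T,
      u (p + 1) (q + 1) t ≤ C * ∫ s in 0..t, γ (u p q s))
    (N : ℕ) {t : ℝ} (ht : t ∈ Icc 0 T) :
    tailSup u (N + 1) t ≤ C * ∫ s in 0..t, γ (tailSup u N s) := by
  have hIcc : uIcc 0 t ⊆ Icc 0 T := uIcc_of_le ht.1 ▸ Icc_subset_Icc_right ht.2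
  have hsup_mem : MapsTo (tailSup u N) (Icc 0 T) (Icc 0 B) := mapsTo_tailSup hB hu_mem
  refine tailSup_le (mul_nonneg hC (intervalIntegral.integral_nonneg ht.1 fun s hs =>
    hγ_nonneg _ (hsup_mem (hIcc (Icc_subset_uIcc hs))).1)) fun p q hNq hqp => ?_
  obtain ⟨q, rfl⟩ : ∃ q', q = q' + 1 := ⟨q - 1, by omega⟩
  obtain ⟨p, rfl⟩ : ∃ p', p = p' + 1 := ⟨p - 1, by omega⟩
  have hqp : q ≤ p := by omega
  calc u (p + 1) (q + 1) t ≤ C * ∫ s in 0..t, γ (u p q s) := h_rec p q hqp t ht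
    _ ≤ C * ∫ s in 0..t, γ (tailSup u N s) := by
      gcongr
      refine intervalIntegral.integral_mono_on ht.1
        (intervalIntegrable_comp_of_mapsTo_Icc hγ_cont (hu_meas p q hqp)
          ((hu_mem p q hqp).mono_left hIcc))
        (intervalIntegrable_comp_of_mapsTo_Icc hγ_cont (measurable_tailSup hu_meas)
          (hsup_mem.mono_left hIcc)) fun s hs => ?_
      have hs' := hIcc (Icc_subset_uIcc hs)
      exact hγ_mono (hu_mem p q hqp hs').1 (hsup_mem hs').1
        (le_tailSup hB (fun p q hqp => (hu_mem p q hqp hs').2) (by omega) hqp)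

theorem double_index_bihari_general
    (γ : ℝ → ℝ) (T C B : ℝ)
    (hC : 0 < C) (hB : 0 ≤ B)
    (hγ_cont : ContinuousOn γ (Ici (0 : ℝ)))
    (hγ_mono : MonotoneOn γ (Ici (0 : ℝ)))
    (hγ_nonneg : ∀ s : ℝ, 0 ≤ s → 0 ≤ γ s)
    (hγ_pos : ∀ s : ℝ, 0 < s → 0 < γ s)
    (h_osgood : ∀ ε : ℝ, 0 < ε →
      ∫⁻ s in Ioc (0 : ℝ) ε, ENNReal.ofReal (1 / γ s) = ⊤)
    (u : ℕ → ℕ → ℝ → ℝ)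
    (hu_meas : ∀ p q : ℕ, q ≤ p → Measurable (u p q))
    (hu_mem : ∀ p q : ℕ, q ≤ p → ∀ t ∈ Icc (0 : ℝ) T, u p q t ∈ Icc (0 : ℝ) B)
    (h_rec : ∀ p q : ℕ, q ≤ p → ∀ t ∈ Icc (0 : ℝ) T,
      u (p + 1) (q + 1) t ≤ C * ∫ s in (0 : ℝ)..t, γ (u p q s)) :
    ∀ t ∈ Icc (0 : ℝ) T,
      (⨅ N : ℕ, ⨆ p : ℕ, ⨆ q : ℕ, ⨆ (_ : N ≤ q), ⨆ (_ : q ≤ p), u p q t) = 0 :=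
  iInf_eq_zero_of_le_integral_osgood hγ_cont hγ_mono hγ_nonneg hγ_pos h_osgood hC.le
    (fun _ => measurable_tailSup hu_meas) (fun _ => mapsTo_tailSup hB hu_mem)
    (fun _ t ht => tailSup_succ_le hB fun p q hqp => hu_mem p q hqp t ht)
    (fun N _ ht => tailSup_succ_le_integral hγ_cont hγ_mono hγ_nonneg hC.le hB hu_meas hu_mem
      h_rec N ht)

/-- **Double-index Bihari-type lemma.**
Let `γ` satisfy the Osgood condition and let bounded measurable functions
`u_{p,q} : [0,T] → [0,B]` (for `p ≥ q`) satisfy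
`u_{p+1,q+1}(t) ≤ C ∫₀ᵗ γ(u_{p,q}(s)) ds`. Then for each `t ∈ [0,T]`,
`inf_N sup_{p ≥ q ≥ N} u_{p,q}(t) = 0`, i.e. `limsup_{p,q→∞} u_{p,q}(t) = 0`. -/
theorem double_index_bihari
    (γ : ℝ → ℝ) (T C B : ℝ)
    (hT : 0 < T) (hC : 0 < C) (hB : 0 ≤ B)
    (hγ_cont : ContinuousOn γ (Ici (0 : ℝ)))
    (hγ_mono : MonotoneOn γ (Ici (0 : ℝ)))
    (hγ_nonneg : ∀ s : ℝ, 0 ≤ s → 0 ≤ γ s)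
    (hγ_zero : γ 0 = 0)
    (hγ_pos : ∀ s : ℝ, 0 < s → 0 < γ s)
    (h_osgood : ∀ ε : ℝ, 0 < ε →
      ∫⁻ s in Ioc (0 : ℝ) ε, ENNReal.ofReal (1 / γ s) = ⊤)
    (u : ℕ → ℕ → ℝ → ℝ)
    (hu_meas : ∀ p q : ℕ, q ≤ p → Measurable (u p q))
    (hu_mem : ∀ p q : ℕ, q ≤ p → ∀ t ∈ Icc (0 : ℝ) T, u p q t ∈ Icc (0 : ℝ) B)
    (h_rec : ∀ p q : ℕ, q ≤ p → ∀ t ∈ Icc (0 : ℝ) T,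
      u (p + 1) (q + 1) t ≤ C * ∫ s in (0 : ℝ)..t, γ (u p q s)) :
    ∀ t ∈ Icc (0 : ℝ) T,
      (⨅ N : ℕ, ⨆ p : ℕ, ⨆ q : ℕ, ⨆ (_ : N ≤ q), ⨆ (_ : q ≤ p), u p q t) = 0 :=
  double_index_bihari_general γ T C B hC hB hγ_cont hγ_mono hγ_nonneg hγ_pos h_osgood u hu_meas
    hu_mem h_rec
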